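/- Let A, B be n×n positive definite complex matrices and let m, m', M, M' be positive reals satisfying either m'·I ≤ A ≤ m·I < M·I ≤ B ≤ M'·I or m'·I ≤ B ≤ m·I < M·I ≤ A ≤ M'·I in the Loewner order. If 1/2 < v < 1, then A∇_v B ≤ 2v(A∇B − A#B) − r₁(A#B − 2(A#_{1/4}B) + A) + K(h^{1/4}, 2)^{−r̂₁} · (A#_v B) in the Loewner order, where h = M/m, r = min{v, 1 − v}, r₁ = min{2r, 1 − 2r} and r̂₁ = min{2r₁, 1 − 2r₁}. -/

import Mathlib

open Matrix
open scoped ComplexOrder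

/-- Real power of a matrix, defined for Hermitian matrices via the spectral
decomposition (functional calculus); junk value otherwise. -/
noncomputable def mrpow {n : ℕ} (A : Matrix (Fin n) (Fin n) ℂ) (t : ℝ) :
    Matrix (Fin n) (Fin n) ℂ :=
  if h : A.IsHermitian then
    (h.eigenvectorUnitary : Matrix (Fin n) (Fin n) ℂ)
      * Matrix.diagonal (fun i => ((h.eigenvalues i ^ t : ℝ) : ℂ))
      * star (h.eigenvectorUnitary : Matrix (Fin n) (Fin n) ℂ)
  else A

/-- Weighted arithmetic mean `A ∇_v B = (1 - v) A + v B`. -/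
noncomputable def anabla {n : ℕ} (v : ℝ) (A B : Matrix (Fin n) (Fin n) ℂ) :
    Matrix (Fin n) (Fin n) ℂ :=
  ((1 - v : ℝ) : ℂ) • A + ((v : ℝ) : ℂ) • B

/-- Weighted geometric mean `A #_v B = A^{1/2} (A^{-1/2} B A^{-1/2})^v A^{1/2}`. -/
noncomputable def asharp {n : ℕ} (v : ℝ) (A B : Matrix (Fin n) (Fin n) ℂ) :
    Matrix (Fin n) (Fin n) ℂ :=
  mrpow A (1 / 2) * mrpow (mrpow A (-(1 / 2)) * B * mrpow A (-(1 / 2))) v * mrpow A (1 / 2)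

/-- Heinz operator mean `H_v(A, B) = (A #_v B + A #_{1-v} B) / 2`. -/
noncomputable def heinz {n : ℕ} (v : ℝ) (A B : Matrix (Fin n) (Fin n) ℂ) :
    Matrix (Fin n) (Fin n) ℂ :=
  ((1 / 2 : ℝ) : ℂ) • (asharp v A B + asharp (1 - v) A B)

/-- The Loewner order: `loewner X Y` iff `Y - X` is positive semidefinite. -/
def loewner {n : ℕ} (X Y : Matrix (Fin n) (Fin n) ℂ) : Prop := (Y - X).PosSemidef

/-- The Kantorovich constant `K(t, 2) = (t + 1)^2 / (4 t)`. -/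
noncomputable def Kant (t : ℝ) : ℝ := (t + 1) ^ 2 / (4 * t)

/-!
Put `X = A^{-1/2} B A^{-1/2}`. Every term of the inequality has the form `A^{1/2} f(X) A^{1/2}`
for an explicit scalar function `f`, and this expression is linear in `f` and monotone in `f` on
the spectrum of `X`, which the hypotheses on `A` and `B` place in `(0, 1/h] ∪ [h, ∞)`. So it
suffices to prove the scalar inequality there. With `x = √t` and `w = 2v - 1` it reads
`(1 + w) x - w + r₁ (√x - 1)² ≤ K(h^{1/4})^{-r̂₁} x^{1+w}`, and on the gap `K(√x) ≥ K(h^{1/4})`.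
The refined Young inequality `K(√x)^{r̂₁} x^{1-w} + r₁ (√x - 1)² ≤ w + (1 - w) x` bounds the
left side by `2x - p` with `p = K(√x)^{r̂₁} x^{1-w}`, and `2x - p ≤ x² / p = K(√x)^{-r̂₁} x^{1+w}`.
The refined Young inequality is the Young inequality with Kantorovich constant,
`K(b/a)^{min(ν, 1-ν)} a^{1-ν} b^ν ≤ (1 - ν) a + ν b`, applied to `(1, √x)` or to `(x, √x)`.
-/

lemma kant_pos {t : ℝ} (ht : 0 < t) : 0 < Kant t := by
  unfold Kant; positivity

lemma kant_inv {t : ℝ} (ht : t ≠ 0) : Kant t⁻¹ = Kant t := by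
  unfold Kant; field_simp; ring

lemma kant_monotoneOn : MonotoneOn Kant (Set.Ici 1) := by
  intro a (ha : 1 ≤ a) b (hb : 1 ≤ b) hab
  rw [Kant, Kant, div_le_div_iff₀ (by positivity) (by positivity)]
  nlinarith [mul_nonneg (sub_nonneg.2 hab) (sub_nonneg.2 (one_le_mul_of_one_le_of_one_le ha hb))]

lemma kant_div_mul {a b : ℝ} (ha : 0 < a) (hb : 0 < b) :
    Kant (b / a) * (a * b) = ((a + b) / 2) ^ 2 := by
  unfold Kant; field_simp; ring

lemma kant_le_kant_of_le_or_le_inv {g s : ℝ} (hg : 1 ≤ g) (hs : 0 < s) (hgs : g ≤ s ∨ s ≤ g⁻¹) :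
    Kant g ≤ Kant s := by
  rcases hgs with hgs | hsg
  · exact kant_monotoneOn hg (hg.trans hgs) hgs
  · rw [← kant_inv hs.ne']
    exact kant_monotoneOn hg (hg.trans (le_inv_of_le_inv₀ hs hsg)) (le_inv_of_le_inv₀ hs hsg)

lemma kant_rpow_mul_le_of_le_half {a b ν : ℝ} (ha : 0 < a) (hb : 0 < b) (hν0 : 0 ≤ ν)
    (hν : ν ≤ 1 / 2) :
    Kant (b / a) ^ ν * (a ^ (1 - ν) * b ^ ν) ≤ (1 - ν) * a + ν * b := by
  have hab : 0 < (a + b) / 2 := by positivity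
  -- weighted AM-GM between `a` and the arithmetic mean `(a + b) / 2`
  have amgm := Real.geom_mean_le_arith_mean2_weighted (w₁ := 1 - 2 * ν) (w₂ := 2 * ν)
    (by linarith) (by linarith) ha.le hab.le (by ring)
  have hpow : ((a + b) / 2) ^ (2 * ν) = Kant (b / a) ^ ν * (a ^ ν * b ^ ν) := by
    rw [Real.rpow_mul hab.le, Real.rpow_two, ← kant_div_mul ha hb,
      Real.mul_rpow (kant_pos (by positivity)).le (by positivity), Real.mul_rpow ha.le hb.le]
  calc Kant (b / a) ^ ν * (a ^ (1 - ν) * b ^ ν)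
      = a ^ (1 - 2 * ν) * ((a + b) / 2) ^ (2 * ν) := by
        rw [hpow, show 1 - ν = (1 - 2 * ν) + ν by ring, Real.rpow_add ha]; ring
    _ ≤ (1 - 2 * ν) * a + 2 * ν * ((a + b) / 2) := amgm
    _ = (1 - ν) * a + ν * b := by ring

theorem kant_rpow_mul_le_weighted_mean {a b ν : ℝ} (ha : 0 < a) (hb : 0 < b) (hν0 : 0 ≤ ν)
    (hν1 : ν ≤ 1) :
    Kant (b / a) ^ min ν (1 - ν) * (a ^ (1 - ν) * b ^ ν) ≤ (1 - ν) * a + ν * b := by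
  rcases le_total ν (1 / 2) with hν | hν
  · rw [min_eq_left (by linarith)]
    exact kant_rpow_mul_le_of_le_half ha hb hν0 hν
  · have := kant_rpow_mul_le_of_le_half hb ha (ν := 1 - ν) (by linarith) (by linarith)
    rw [min_eq_right (by linarith), ← kant_inv (by positivity), inv_div]
    rw [sub_sub_cancel] at this
    linarith [mul_comm (a ^ (1 - ν)) (b ^ ν)]

theorem kant_rpow_mul_add_le_weighted_mean {x μ : ℝ} (hx : 0 < x) (hμ0 : 0 ≤ μ) (hμ1 : μ ≤ 1) :
    Kant √x ^ min (2 * min μ (1 - μ)) (1 - 2 * min μ (1 - μ)) * x ^ μ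
      + min μ (1 - μ) * (√x - 1) ^ 2 ≤ (1 - μ) + μ * x := by
  have hs : 0 < √x := Real.sqrt_pos.2 hx
  have hsq : √x ^ 2 = x := Real.sq_sqrt hx.le
  have hsrpow (y : ℝ) : √x ^ (2 * y) = x ^ y := by
    rw [Real.rpow_mul hs.le, Real.rpow_two, hsq]
  rcases le_total μ (1 / 2) with hμ | hμ
  · have := kant_rpow_mul_le_weighted_mean one_pos hs (ν := 2 * μ) (by linarith) (by linarith)
    rw [div_one, Real.one_rpow, one_mul, hsrpow] at this
    rw [min_eq_left (show μ ≤ 1 - μ by linarith)]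
    linear_combination this + μ * hsq
  · have := kant_rpow_mul_le_weighted_mean hx hs (ν := 2 * (1 - μ)) (by linarith) (by linarith)
    rw [Real.sqrt_div_self', one_div, kant_inv hs.ne', hsrpow, ← Real.rpow_add hx,
      show 1 - 2 * (1 - μ) + (1 - μ) = μ by ring] at this
    rw [min_eq_right (show 1 - μ ≤ μ by linarith)]
    linear_combination this + (1 - μ) * hsq

theorem reverse_young_kant {x w : ℝ} (hx : 0 < x) (hw0 : 0 ≤ w) (hw1 : w ≤ 1) :
    (1 + w) * x - w + min w (1 - w) * (√x - 1) ^ 2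
      ≤ Kant √x ^ (-min (2 * min w (1 - w)) (1 - 2 * min w (1 - w))) * x ^ (1 + w) := by
  obtain ⟨k, hk_def⟩ : ∃ k, k = Kant √x ^ min (2 * min w (1 - w)) (1 - 2 * min w (1 - w)) :=
    ⟨_, rfl⟩
  have hk : 0 < k := hk_def ▸ Real.rpow_pos_of_pos (kant_pos (Real.sqrt_pos.2 hx)) _
  have young := kant_rpow_mul_add_le_weighted_mean hx (μ := 1 - w) (by linarith) (by linarith)
  rw [sub_sub_cancel, min_comm (1 - w) w, ← hk_def] at young
  have hp : 0 < k * x ^ (1 - w) := by positivity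
  have amgm : 2 * x - k * x ^ (1 - w) ≤ x ^ 2 / (k * x ^ (1 - w)) := by
    rw [le_div_iff₀ hp]; nlinarith [sq_nonneg (k * x ^ (1 - w) - x)]
  have hq : x ^ 2 / (k * x ^ (1 - w)) = k⁻¹ * x ^ (1 + w) := by
    rw [← Real.rpow_natCast, Nat.cast_ofNat, show (2 : ℝ) = (1 - w) + (1 + w) by ring,
      Real.rpow_add hx]
    field_simp
  rw [Real.rpow_neg (kant_pos (Real.sqrt_pos.2 hx)).le, ← hk_def]
  linarith

theorem weighted_mean_le_of_spectral_gap {t h v r1 rh1 : ℝ} (ht : 0 < t) (hh : 1 ≤ h)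
    (hgap : h ≤ t ∨ t ≤ h⁻¹) (hv0 : 1 / 2 ≤ v) (hv1 : v ≤ 1)
    (hr1 : r1 = min (2 * (1 - v)) (1 - 2 * (1 - v))) (hrh1 : rh1 = min (2 * r1) (1 - 2 * r1)) :
    (1 - v) + v * t ≤ 2 * v * ((1 + t) / 2 - t ^ (1 / 2 : ℝ))
      - r1 * (t ^ (1 / 2 : ℝ) - 2 * t ^ (1 / 4 : ℝ) + 1)
      + Kant (h ^ (1 / 4 : ℝ)) ^ (-rh1) * t ^ v := by
  have hx : 0 < t ^ (1 / 2 : ℝ) := Real.rpow_pos_of_pos ht _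
  have hsqrt : √(t ^ (1 / 2 : ℝ)) = t ^ (1 / 4 : ℝ) := by
    rw [Real.sqrt_eq_rpow, ← Real.rpow_mul ht.le]; norm_num
  have hsq : (t ^ (1 / 2 : ℝ)) ^ 2 = t := by
    rw [← Real.rpow_natCast, ← Real.rpow_mul ht.le]; norm_num
  have htv : t ^ v = (t ^ (1 / 2 : ℝ)) ^ (1 + (2 * v - 1)) := by
    rw [← Real.rpow_mul ht.le]; ring_nf
  have hr1' : r1 = min (2 * v - 1) (1 - (2 * v - 1)) := by
    rw [hr1, min_comm]; ring_nf
  have young := reverse_young_kant hx (w := 2 * v - 1) (by linarith) (by linarith)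
  rw [← hr1', ← hrh1, hsqrt, ← htv] at young
  have hr1_nonneg : 0 ≤ r1 := hr1 ▸ le_min (by linarith) (by linarith)
  have hr1_le : r1 ≤ 1 / 2 := by
    rw [hr1, min_le_iff]; by_contra! H; linarith [H.1, H.2]
  have hrh0 : 0 ≤ rh1 := hrh1 ▸ le_min (by linarith) (by linarith)
  have hK : Kant (h ^ (1 / 4 : ℝ)) ≤ Kant (t ^ (1 / 4 : ℝ)) := by
    refine kant_le_kant_of_le_or_le_inv (Real.one_le_rpow hh (by norm_num))
      (Real.rpow_pos_of_pos ht _) ?_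
    rw [← Real.inv_rpow (by linarith)]
    exact hgap.imp (Real.rpow_le_rpow (by linarith) · (by norm_num))
      (Real.rpow_le_rpow ht.le · (by norm_num))
  have hKpow :
      Kant (t ^ (1 / 4 : ℝ)) ^ (-rh1) * t ^ v ≤ Kant (h ^ (1 / 4 : ℝ)) ^ (-rh1) * t ^ v :=
    mul_le_mul_of_nonneg_right (Real.rpow_le_rpow_of_nonpos
      (kant_pos (Real.rpow_pos_of_pos (by linarith) _)) hK (by linarith)) (by positivity)
  have hs : (t ^ (1 / 4 : ℝ)) ^ 2 = t ^ (1 / 2 : ℝ) := by rw [← hsqrt, Real.sq_sqrt hx.le]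
  linear_combination young + hKpow - r1 * hs

open scoped MatrixOrder

lemma Matrix.continuousOn_spectrum_real {ι 𝕜 : Type*} [Fintype ι] [DecidableEq ι] [RCLike 𝕜]
    (f : ℝ → ℝ) (X : Matrix ι ι 𝕜) : ContinuousOn f (spectrum ℝ X) :=
  X.finite_real_spectrum.continuousOn f

section
variable {n : ℕ} {A B : Matrix (Fin n) (Fin n) ℂ}

lemma loewner_iff_le {X Y : Matrix (Fin n) (Fin n) ℂ} : loewner X Y ↔ X ≤ Y := Iff.rfl

lemma mrpow_eq_cfc (hA : A.IsHermitian) (t : ℝ) : mrpow A t = cfc (fun x : ℝ => x ^ t) A := by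
  rw [mrpow, dif_pos hA, hA.cfc_eq, Matrix.IsHermitian.cfc, Unitary.conjStarAlgAut_apply]; rfl

lemma isHermitian_mrpow (hA : A.IsHermitian) (t : ℝ) : (mrpow A t).IsHermitian := by
  rw [mrpow_eq_cfc hA]; exact cfc_predicate _ _

lemma mrpow_mul_mrpow (hA : A.PosDef) (s t : ℝ) : mrpow A s * mrpow A t = mrpow A (s + t) := by
  rw [mrpow_eq_cfc hA.1, mrpow_eq_cfc hA.1, mrpow_eq_cfc hA.1,
    ← cfc_mul _ _ _ (A.continuousOn_spectrum_real _) (A.continuousOn_spectrum_real _)]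
  exact cfc_congr fun x hx => (Real.rpow_add (hA.isStrictlyPositive.spectrum_pos hx) s t).symm

lemma mrpow_zero (hA : A.IsHermitian) : mrpow A 0 = 1 := by
  simp only [mrpow_eq_cfc hA, Real.rpow_zero]
  exact cfc_const_one ℝ A hA

lemma mrpow_one (A : Matrix (Fin n) (Fin n) ℂ) : mrpow A 1 = A := by
  by_cases hA : A.IsHermitian
  · simp only [mrpow_eq_cfc hA, Real.rpow_one]
    exact cfc_id' ℝ A hA
  · rw [mrpow, dif_neg hA]

lemma mrpow_half_mul_mrpow_neg_half (hA : A.PosDef) :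
    mrpow A (1 / 2) * mrpow A (-(1 / 2)) = 1 := by
  rw [mrpow_mul_mrpow hA, add_neg_cancel, mrpow_zero hA.1]

lemma mrpow_neg_half_mul_mrpow_half (hA : A.PosDef) :
    mrpow A (-(1 / 2)) * mrpow A (1 / 2) = 1 := by
  rw [mrpow_mul_mrpow hA, neg_add_cancel, mrpow_zero hA.1]

lemma mrpow_half_mul_self (hA : A.PosDef) : mrpow A (1 / 2) * mrpow A (1 / 2) = A := by
  rw [mrpow_mul_mrpow hA, add_halves, mrpow_one]

noncomputable def invSqrtConj (A B : Matrix (Fin n) (Fin n) ℂ) : Matrix (Fin n) (Fin n) ℂ :=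
  mrpow A (-(1 / 2)) * B * mrpow A (-(1 / 2))

noncomputable def perspective (f : ℝ → ℝ) (A B : Matrix (Fin n) (Fin n) ℂ) :
    Matrix (Fin n) (Fin n) ℂ :=
  mrpow A (1 / 2) * cfc f (invSqrtConj A B) * mrpow A (1 / 2)

lemma isHermitian_invSqrtConj (hA : A.IsHermitian) (hB : B.IsHermitian) :
    (invSqrtConj A B).IsHermitian := by
  simpa only [invSqrtConj, (isHermitian_mrpow hA _).eq] using
    Matrix.isHermitian_conjTranspose_mul_mul (mrpow A (-(1 / 2))) hB

lemma posDef_invSqrtConj (hA : A.PosDef) (hB : B.PosDef) : (invSqrtConj A B).PosDef := by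
  have hinj : Function.Injective (mrpow A (-(1 / 2))).mulVec := fun v w hvw => by
    have := congrArg (mrpow A (1 / 2)).mulVec hvw
    rwa [Matrix.mulVec_mulVec, Matrix.mulVec_mulVec, mrpow_half_mul_mrpow_neg_half hA,
      Matrix.one_mulVec, Matrix.one_mulVec] at this
  simpa only [invSqrtConj, (isHermitian_mrpow hA.1 _).eq] using
    hB.conjTranspose_mul_mul_same hinj

lemma invSqrtConj_self (hA : A.PosDef) : invSqrtConj A A = 1 := by
  rw [invSqrtConj]
  nth_rw 2 [← mrpow_half_mul_self hA]
  rw [← Matrix.mul_assoc, mrpow_neg_half_mul_mrpow_half hA, Matrix.one_mul,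
    mrpow_half_mul_mrpow_neg_half hA]

lemma invSqrtConj_smul_one (A : Matrix (Fin n) (Fin n) ℂ) (c : ℝ) :
    invSqrtConj A (c • 1) = c • (mrpow A (-(1 / 2)) * mrpow A (-(1 / 2))) := by
  rw [invSqrtConj, Matrix.mul_smul, Matrix.mul_one, Matrix.smul_mul]

lemma invSqrtConj_mono (hA : A.IsHermitian) {B₁ B₂ : Matrix (Fin n) (Fin n) ℂ} (h : B₁ ≤ B₂) :
    invSqrtConj A B₁ ≤ invSqrtConj A B₂ :=
  IsSelfAdjoint.conjugate_le_conjugate h (isHermitian_mrpow hA _).isSelfAdjoint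

lemma le_spectrum_invSqrtConj (hA : A.PosDef) (hB : B.IsHermitian) {m M : ℝ} (hm : 0 < m)
    (hM : 0 ≤ M) (hAm : A ≤ m • 1) (hMB : M • 1 ≤ B) :
    ∀ x ∈ spectrum ℝ (invSqrtConj A B), M / m ≤ x := by
  have h1 := invSqrtConj_mono hA.1 hAm
  have h2 := invSqrtConj_mono hA.1 hMB
  rw [invSqrtConj_self hA, invSqrtConj_smul_one] at h1
  rw [invSqrtConj_smul_one] at h2
  have hX : (M / m) • (1 : Matrix (Fin n) (Fin n) ℂ) ≤ invSqrtConj A B := calc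
    (M / m) • (1 : Matrix (Fin n) (Fin n) ℂ)
      ≤ (M / m) • m • (mrpow A (-(1 / 2)) * mrpow A (-(1 / 2))) :=
        smul_le_smul_of_nonneg_left h1 (by positivity)
    _ = M • (mrpow A (-(1 / 2)) * mrpow A (-(1 / 2))) := by
      rw [smul_smul, div_mul_cancel₀ _ hm.ne']
    _ ≤ invSqrtConj A B := h2
  rwa [← Algebra.algebraMap_eq_smul_one,
    algebraMap_le_iff_le_spectrum (isHermitian_invSqrtConj hA.1 hB).isSelfAdjoint] at hX

lemma spectrum_invSqrtConj_le (hA : A.PosDef) (hB : B.IsHermitian) {m M : ℝ} (hm : 0 ≤ m)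
    (hM : 0 < M) (hMA : M • 1 ≤ A) (hBm : B ≤ m • 1) :
    ∀ x ∈ spectrum ℝ (invSqrtConj A B), x ≤ m / M := by
  have h1 := invSqrtConj_mono hA.1 hMA
  have h2 := invSqrtConj_mono hA.1 hBm
  rw [invSqrtConj_self hA, invSqrtConj_smul_one] at h1
  rw [invSqrtConj_smul_one] at h2
  have hX : invSqrtConj A B ≤ (m / M) • (1 : Matrix (Fin n) (Fin n) ℂ) := calc
    invSqrtConj A B ≤ m • (mrpow A (-(1 / 2)) * mrpow A (-(1 / 2))) := h2
    _ = (m / M) • M • (mrpow A (-(1 / 2)) * mrpow A (-(1 / 2))) := by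
      rw [smul_smul, div_mul_cancel₀ _ hM.ne']
    _ ≤ (m / M) • (1 : Matrix (Fin n) (Fin n) ℂ) :=
      smul_le_smul_of_nonneg_left h1 (by positivity)
  rwa [← Algebra.algebraMap_eq_smul_one, le_algebraMap_iff_spectrum_le
    (isHermitian_invSqrtConj hA.1 hB).isSelfAdjoint] at hX

lemma perspective_add (f g : ℝ → ℝ) :
    perspective (fun x => f x + g x) A B = perspective f A B + perspective g A B := by
  rw [perspective, cfc_add _ _ _ (Matrix.continuousOn_spectrum_real _ _)
    (Matrix.continuousOn_spectrum_real _ _), Matrix.mul_add, Matrix.add_mul]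
  rfl

lemma perspective_sub (f g : ℝ → ℝ) :
    perspective (fun x => f x - g x) A B = perspective f A B - perspective g A B := by
  rw [perspective, cfc_sub _ _ _ (Matrix.continuousOn_spectrum_real _ _)
    (Matrix.continuousOn_spectrum_real _ _), Matrix.mul_sub, Matrix.sub_mul]
  rfl

lemma perspective_const_mul (c : ℝ) (f : ℝ → ℝ) :
    perspective (fun x => c * f x) A B = (c : ℂ) • perspective f A B := by
  rw [perspective, cfc_const_mul _ _ _ (Matrix.continuousOn_spectrum_real _ _), mul_smul_comm,
    smul_mul_assoc, Complex.coe_smul]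
  rfl

lemma perspective_one (hA : A.PosDef) (hB : B.IsHermitian) :
    perspective (fun _ => 1) A B = A := by
  rw [perspective, cfc_const_one ℝ _ (isHermitian_invSqrtConj hA.1 hB).isSelfAdjoint,
    Matrix.mul_one, mrpow_half_mul_self hA]

lemma asharp_one (hA : A.PosDef) : asharp 1 A B = B := by
  rw [asharp, mrpow_one, ← Matrix.mul_assoc, ← Matrix.mul_assoc,
    mrpow_half_mul_mrpow_neg_half hA, Matrix.one_mul, Matrix.mul_assoc,
    mrpow_neg_half_mul_mrpow_half hA, Matrix.mul_one]

lemma perspective_rpow (hA : A.IsHermitian) (hB : B.IsHermitian) (u : ℝ) :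
    perspective (fun x => x ^ u) A B = asharp u A B := by
  rw [perspective, ← mrpow_eq_cfc (isHermitian_invSqrtConj hA hB)]
  rfl

lemma perspective_mono (hA : A.IsHermitian) {f g : ℝ → ℝ}
    (hfg : ∀ x ∈ spectrum ℝ (invSqrtConj A B), f x ≤ g x) :
    perspective f A B ≤ perspective g A B :=
  IsSelfAdjoint.conjugate_le_conjugate (cfc_mono hfg (Matrix.continuousOn_spectrum_real _ _)
    (Matrix.continuousOn_spectrum_real _ _)) (isHermitian_mrpow hA _).isSelfAdjoint

end

theorem stmt_14_general {n : ℕ} (A B : Matrix (Fin n) (Fin n) ℂ) (m m' M M' v h r r1 rh1 : ℝ)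
    (hA : A.PosDef) (hB : B.PosDef)
    (hm : 0 < m) (hmM : m < M)
    (hcond : (loewner ((m' : ℂ) • 1) A ∧ loewner A ((m : ℂ) • 1) ∧
        loewner ((M : ℂ) • 1) B ∧ loewner B ((M' : ℂ) • 1)) ∨
      (loewner ((m' : ℂ) • 1) B ∧ loewner B ((m : ℂ) • 1) ∧
        loewner ((M : ℂ) • 1) A ∧ loewner A ((M' : ℂ) • 1)))
    (hh : h = M / m) (hr : r = min v (1 - v))
    (hr1 : r1 = min (2 * r) (1 - 2 * r)) (hrh1 : rh1 = min (2 * r1) (1 - 2 * r1))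
    (hv0 : 1 / 2 < v) (hv : v < 1) :
    loewner (anabla v A B)
      (((2 * v : ℝ) : ℂ) • (anabla (1 / 2) A B - asharp (1 / 2) A B)
        - ((r1 : ℝ) : ℂ) • (asharp (1 / 2) A B - (2 : ℂ) • asharp (1 / 4) A B + A)
        + ((Kant (h ^ ((1 : ℝ) / 4)) ^ (-rh1) : ℝ) : ℂ) • asharp v A B) := by
  have hgap : ∀ t ∈ spectrum ℝ (invSqrtConj A B), h ≤ t ∨ t ≤ h⁻¹ := by
    simp only [loewner_iff_le, Complex.coe_smul] at hcond
    rw [hh, inv_div]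
    rcases hcond with ⟨-, hAm, hMB, -⟩ | ⟨-, hBm, hMA, -⟩
    · exact fun t ht => .inl (le_spectrum_invSqrtConj hA hB.1 hm (by linarith) hAm hMB t ht)
    · exact fun t ht => .inr (spectrum_invSqrtConj_le hA hB.1 hm.le (by linarith) hMA hBm t ht)
  have hr' : r = 1 - v := by rw [hr, min_eq_right (by linarith)]
  have key := perspective_mono (B := B) hA.1
    (f := fun t => (1 - v) * 1 + v * t ^ (1 : ℝ))
    (g := fun t => 2 * v * (((1 - 1 / 2) * 1 + 1 / 2 * t ^ (1 : ℝ)) - t ^ (1 / 2 : ℝ))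
      - r1 * (t ^ (1 / 2 : ℝ) - 2 * t ^ (1 / 4 : ℝ) + 1) + Kant (h ^ (1 / 4 : ℝ)) ^ (-rh1) * t ^ v)
    fun t ht => by
      have := weighted_mean_le_of_spectral_gap
        ((posDef_invSqrtConj hA hB).isStrictlyPositive.spectrum_pos ht)
        (hh ▸ (one_lt_div hm).2 hmM).le (hgap t ht) hv0.le hv.le (hr' ▸ hr1) hrh1
      simp only [Real.rpow_one]
      linarith
  simp only [perspective_add, perspective_sub, perspective_const_mul, perspective_one hA hB.1,
    perspective_rpow hA.1 hB.1, asharp_one hA] at key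
  simpa only [loewner_iff_le, anabla, Complex.ofReal_ofNat] using key

theorem stmt_14 {n : ℕ} (A B : Matrix (Fin n) (Fin n) ℂ) (m m' M M' v h r r1 rh1 : ℝ)
    (hA : A.PosDef) (hB : B.PosDef)
    (hm' : 0 < m') (hm : 0 < m) (hM : 0 < M) (hM' : 0 < M') (hmM : m < M)
    (hcond : (loewner ((m' : ℂ) • 1) A ∧ loewner A ((m : ℂ) • 1) ∧
        loewner ((M : ℂ) • 1) B ∧ loewner B ((M' : ℂ) • 1)) ∨
      (loewner ((m' : ℂ) • 1) B ∧ loewner B ((m : ℂ) • 1) ∧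
        loewner ((M : ℂ) • 1) A ∧ loewner A ((M' : ℂ) • 1)))
    (hh : h = M / m) (hr : r = min v (1 - v))
    (hr1 : r1 = min (2 * r) (1 - 2 * r)) (hrh1 : rh1 = min (2 * r1) (1 - 2 * r1))
    (hv0 : 1 / 2 < v) (hv : v < 1) :
    loewner (anabla v A B)
      (((2 * v : ℝ) : ℂ) • (anabla (1 / 2) A B - asharp (1 / 2) A B)
        - ((r1 : ℝ) : ℂ) • (asharp (1 / 2) A B - (2 : ℂ) • asharp (1 / 4) A B + A)
        + ((Kant (h ^ ((1 : ℝ) / 4)) ^ (-rh1) : ℝ) : ℂ) • asharp v A B) :=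
  stmt_14_general A B m m' M M' v h r r1 rh1 hA hB hm hmM hcond hh hr hr1 hrh1 hv0 hv
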